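/- Each component Â_i = (1/2)Σⱼ{Λ̂_{ij}, π̂ⱼ} − k x̂ᵢ/|x̂| + iℏμᵢR̂ᵢπ̂ᵢ of the Dunkl Laplace–Runge–Lenz vector commutes with the Dunkl–Kepler–Coulomb Hamiltonian Ĥ = π̂²/2 − k/|x̂|. -/

import Mathlib

open Complex BigOperators Finset

noncomputable section

variable {N : ℕ}

/-- Reflection of the `i`-th coordinate: `σᵢ(x)` flips the sign of `xᵢ`. -/
def flipC (i : Fin N) (x : Fin N → ℝ) : Fin N → ℝ := Function.update x i (-(x i))

/-- The reflection operator `R̂ᵢ f (x) = f (σᵢ x)`. -/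
def Rop (i : Fin N) (f : (Fin N → ℝ) → ℂ) : (Fin N → ℝ) → ℂ := fun x => f (flipC i x)

/-- The Dunkl derivative `Dᵢ f (x) = ∂ᵢ f(x) + (μᵢ/xᵢ)(f(x) - f(σᵢ x))`. -/
def Dop (μ : Fin N → ℝ) (i : Fin N) (f : (Fin N → ℝ) → ℂ) : (Fin N → ℝ) → ℂ :=
  fun x => fderiv ℝ f x (Pi.single i 1) + ((μ i : ℂ) / (x i : ℂ)) * (f x - f (flipC i x))

/-- The Dunkl momentum operator `π̂ᵢ = -iℏ Dᵢ`. -/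
def Pop (μ : Fin N → ℝ) (hb : ℝ) (i : Fin N) (f : (Fin N → ℝ) → ℂ) : (Fin N → ℝ) → ℂ :=
  fun x => -(Complex.I * (hb : ℂ)) * Dop μ i f x

/-- The Dunkl angular momentum operator `Λ̂ᵢⱼ = x̂ᵢ π̂ⱼ - x̂ⱼ π̂ᵢ`. -/
def Lam (μ : Fin N → ℝ) (hb : ℝ) (i j : Fin N) (f : (Fin N → ℝ) → ℂ) : (Fin N → ℝ) → ℂ :=
  fun x => (x i : ℂ) * Pop μ hb j f x - (x j : ℂ) * Pop μ hb i f x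

/-- The complement of the coordinate hyperplanes in `ℝ^N`. -/
def Udom (N : ℕ) : Set (Fin N → ℝ) := {x | ∀ i, x i ≠ 0}

/-- The Euclidean norm `|x| = √(Σᵢ xᵢ²)`. -/
def nrm (x : Fin N → ℝ) : ℝ := Real.sqrt (∑ i, (x i) ^ 2)

/-- The Dunkl–Kepler–Coulomb Hamiltonian `Ĥ = π̂²/2 - k/|x̂|`. -/
def Hkc (μ : Fin N → ℝ) (hb k : ℝ) (f : (Fin N → ℝ) → ℂ) : (Fin N → ℝ) → ℂ :=
  fun x => (1 / 2 : ℂ) * ∑ j, Pop μ hb j (Pop μ hb j f) x - (k : ℂ) * f x / (nrm x : ℂ)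

/-- Component `Âᵢ = (1/2) Σⱼ {Λ̂ᵢⱼ, π̂ⱼ} - k x̂ᵢ/|x̂| + iℏ μᵢ R̂ᵢ π̂ᵢ`
of the Dunkl Laplace–Runge–Lenz vector. -/
def Alrl (μ : Fin N → ℝ) (hb k : ℝ) (i : Fin N) (f : (Fin N → ℝ) → ℂ) : (Fin N → ℝ) → ℂ :=
  fun x => (1 / 2 : ℂ) * ∑ j, (Lam μ hb i j (Pop μ hb j f) x + Pop μ hb j (Lam μ hb i j f) x)
    - (k : ℂ) * (x i : ℂ) * f x / (nrm x : ℂ)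
    + Complex.I * (hb : ℂ) * (μ i : ℂ) * Rop i (Pop μ hb i f) x

/-! ### Layer 0: basic facts -/

lemma isOpen_Udom : IsOpen (Udom N) := by
  have : Udom N = ⋂ i : Fin N, (fun x : Fin N → ℝ => x i) ⁻¹' {0}ᶜ := by
    ext x; simp [Udom, Set.mem_iInter]
  rw [this]
  exact isOpen_iInter_of_finite fun i =>
    (isOpen_compl_singleton).preimage (continuous_apply i)

lemma Udom_mem_nhds {x : Fin N → ℝ} (hx : x ∈ Udom N) : Udom N ∈ nhds x :=
  isOpen_Udom.mem_nhds hx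

@[simp] lemma flipC_apply_self (i : Fin N) (x : Fin N → ℝ) : flipC i x i = -(x i) := by
  simp [flipC]

lemma flipC_apply_ne (i j : Fin N) (x : Fin N → ℝ) (h : j ≠ i) : flipC i x j = x j := by
  simp [flipC, Function.update_of_ne h]

@[simp] lemma flipC_flipC (i : Fin N) (x : Fin N → ℝ) : flipC i (flipC i x) = x := by
  funext j
  rcases eq_or_ne j i with rfl | h
  · simp
  · rw [flipC_apply_ne _ _ _ h, flipC_apply_ne _ _ _ h]

lemma flipC_mem_Udom {i : Fin N} {x : Fin N → ℝ} (hx : x ∈ Udom N) : flipC i x ∈ Udom N := by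
  intro j
  rcases eq_or_ne j i with rfl | h
  · simpa using hx j
  · rw [flipC_apply_ne _ _ _ h]; exact hx j

lemma flipC_comm (i j : Fin N) (x : Fin N → ℝ) : flipC i (flipC j x) = flipC j (flipC i x) := by
  rcases eq_or_ne i j with rfl | hij
  · rfl
  funext m
  rcases eq_or_ne m i with rfl | hmi
  · rw [flipC_apply_self, flipC_apply_ne _ _ _ hij, flipC_apply_ne _ _ _ hij, flipC_apply_self]
  · rcases eq_or_ne m j with rfl | hmj
    · rw [flipC_apply_ne _ _ _ hmi, flipC_apply_self, flipC_apply_self,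
        flipC_apply_ne _ _ _ (Ne.symm hij)]
    · rw [flipC_apply_ne _ _ _ hmi, flipC_apply_ne _ _ _ hmj, flipC_apply_ne _ _ _ hmj,
        flipC_apply_ne _ _ _ hmi]

/-- flip as a continuous linear map -/
def flipL (i : Fin N) : (Fin N → ℝ) →L[ℝ] (Fin N → ℝ) :=
  (LinearMap.pi fun j => if j = i then -(LinearMap.proj i) else LinearMap.proj j).toContinuousLinearMap

lemma flipL_apply (i : Fin N) (x : Fin N → ℝ) : flipL i x = flipC i x := by
  funext j
  rcases eq_or_ne j i with rfl | h
  · simp [flipL, LinearMap.pi_apply]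
  · simp [flipL, LinearMap.pi_apply, h, flipC_apply_ne _ _ _ h]

lemma flipL_single_self (i : Fin N) :
    flipL i (Pi.single i (1:ℝ)) = -Pi.single i (1:ℝ) := by
  rw [flipL_apply]
  funext j
  rcases eq_or_ne j i with rfl | h
  · simp
  · rw [flipC_apply_ne _ _ _ h]; simp [Pi.single_eq_of_ne h]

lemma flipL_single_ne (i j : Fin N) (h : j ≠ i) :
    flipL i (Pi.single j (1:ℝ)) = Pi.single j (1:ℝ) := by
  rw [flipL_apply]
  funext m
  rcases eq_or_ne m i with rfl | hm
  · rw [flipC_apply_self]; simp [Pi.single_eq_of_ne (Ne.symm h)]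
  · rw [flipC_apply_ne _ _ _ hm]

lemma nrm_flipC (i : Fin N) (x : Fin N → ℝ) : nrm (flipC i x) = nrm x := by
  unfold nrm
  congr 1
  apply Finset.sum_congr rfl
  intro j _
  rcases eq_or_ne j i with rfl | h
  · simp
  · rw [flipC_apply_ne _ _ _ h]

lemma nrm_pos {x : Fin N → ℝ} (hN : 0 < N) (hx : x ∈ Udom N) : 0 < nrm x := by
  apply Real.sqrt_pos.2
  have i0 : Fin N := ⟨0, hN⟩
  have h0 : x i0 ≠ 0 := hx i0
  have : (0:ℝ) < (x i0)^2 := by positivity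
  refine Finset.sum_pos' (fun j _ => sq_nonneg _) ⟨i0, Finset.mem_univ _, this⟩

/-! ### Layer 1: smoothness and partial derivatives -/

open ContDiff in
/-- smooth on the domain -/
def Sm (g : (Fin N → ℝ) → ℂ) : Prop := ContDiffOn ℝ ∞ g (Udom N)

/-- partial derivative -/
def pdv (i : Fin N) (g : (Fin N → ℝ) → ℂ) : (Fin N → ℝ) → ℂ :=
  fun x => fderiv ℝ g x (Pi.single i 1)

/-- coordinate function as ℂ-valued -/
def cdv (m : Fin N) : (Fin N → ℝ) → ℂ := fun x => ((x m : ℝ) : ℂ)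

/-- |x| as ℂ-valued -/
def sC : (Fin N → ℝ) → ℂ := fun x => ((nrm x : ℝ) : ℂ)

/-- 1/|x| as ℂ-valued -/
def uC : (Fin N → ℝ) → ℂ := fun x => ((nrm x : ℝ) : ℂ)⁻¹

section SmLemmas

variable {g h : (Fin N → ℝ) → ℂ} {x : Fin N → ℝ}

open ContDiff

lemma Sm.contAt (hg : Sm g) (hx : x ∈ Udom N) : ContDiffAt ℝ ∞ g x :=
  hg.contDiffAt (Udom_mem_nhds hx)

lemma Sm.diffAt (hg : Sm g) (hx : x ∈ Udom N) : DifferentiableAt ℝ g x :=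
  (hg.contAt hx).differentiableAt (by simp)

lemma Sm.congrU (hg : Sm g) (h' : ∀ y ∈ Udom N, h y = g y) : Sm h := hg.congr h'

lemma Sm.add (hg : Sm g) (hh : Sm h) : Sm (fun y => g y + h y) := ContDiffOn.add hg hh

lemma Sm.sub (hg : Sm g) (hh : Sm h) : Sm (fun y => g y - h y) := ContDiffOn.sub hg hh

lemma Sm.mul (hg : Sm g) (hh : Sm h) : Sm (fun y => g y * h y) := ContDiffOn.mul hg hh

lemma Sm.constMul (hg : Sm g) (c : ℂ) : Sm (fun y => c * g y) := contDiffOn_const.mul hg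

lemma Sm.sum {s : Finset (Fin N)} {F : Fin N → (Fin N → ℝ) → ℂ} (hF : ∀ j ∈ s, Sm (F j)) :
    Sm (fun y => ∑ j ∈ s, F j y) := by
  classical
  induction s using Finset.induction with
  | empty => simpa [Sm] using contDiffOn_const
  | insert _ _ hj ih =>
    rename_i a s
    simp only [Finset.sum_insert hj]
    exact (hF a (Finset.mem_insert_self a s)).add
      (ih fun j hjs => hF j (Finset.mem_insert_of_mem hjs))

lemma Sm.pd (hg : Sm g) (i : Fin N) : Sm (pdv i g) := by
  have h1 : ContDiffOn ℝ ∞ (fderiv ℝ g) (Udom N) :=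
    hg.fderiv_of_isOpen isOpen_Udom (by simp)
  exact h1.clm_apply contDiffOn_const

lemma Sm.rop (hg : Sm g) (i : Fin N) : Sm (Rop i g) := by
  have : Rop i g = g ∘ (flipL i) := by
    funext y; simp [Rop, Function.comp, flipL_apply]
  rw [this]
  exact hg.comp ((flipL i).contDiff.of_le le_top).contDiffOn
    (fun y hy => by simpa [flipL_apply] using flipC_mem_Udom hy)

end SmLemmas

section SmLemmas2

open ContDiff

variable {g h : (Fin N → ℝ) → ℂ} {x : Fin N → ℝ}

lemma contDiff_cdv (m : Fin N) : ContDiff ℝ ∞ (cdv (N := N) m) :=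
  Complex.ofRealCLM.contDiff.comp (contDiff_apply ℝ ℝ m)

lemma Sm.cd (m : Fin N) : Sm (cdv (N := N) m) := (contDiff_cdv m).contDiffOn

lemma cdv_ne_zero {m : Fin N} (hx : x ∈ Udom N) : cdv m x ≠ 0 := by
  simpa [cdv] using hx m

lemma Sm.cdMul (hg : Sm g) (m : Fin N) : Sm (fun y => cdv m y * g y) := (Sm.cd m).mul hg

lemma sm_q : Sm (fun y : Fin N → ℝ => ∑ j, cdv j y * cdv j y) :=
  Sm.sum (fun j _ => (Sm.cd j).mul (Sm.cd j))

lemma nrm_ne_zero (hN : 0 < N) (hx : x ∈ Udom N) : nrm x ≠ 0 := (nrm_pos hN hx).ne'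

lemma sm_sC (hN : 0 < N) : Sm (sC (N := N)) := by
  have hq : ContDiffOn ℝ ∞ (fun y : Fin N → ℝ => ∑ j, (y j)^2) (Udom N) :=
    (ContDiff.contDiffOn (by
      apply ContDiff.sum
      intro j _
      exact (contDiff_apply ℝ ℝ j).pow 2))
  have hqne : ∀ y ∈ Udom N, (∑ j, (y j)^2) ≠ 0 := by
    intro y hy
    have := nrm_pos hN hy
    simp only [nrm] at this
    intro h0
    rw [h0] at this
    simpa using this
  have hs : ContDiffOn ℝ ∞ (fun y : Fin N → ℝ => Real.sqrt (∑ j, (y j)^2)) (Udom N) :=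
    hq.sqrt hqne
  have : sC (N := N) = fun y => ((Real.sqrt (∑ j, (y j)^2) : ℝ) : ℂ) := by
    funext y; simp [sC, nrm]
  rw [this]
  exact Complex.ofRealCLM.contDiff.comp_contDiffOn hs

lemma sC_ne_zero (hN : 0 < N) (hx : x ∈ Udom N) : sC x ≠ 0 := by
  simp [sC]
  exact nrm_ne_zero hN hx

lemma sm_uC (hN : 0 < N) : Sm (uC (N := N)) := by
  have : uC (N := N) = fun y => (sC y)⁻¹ := rfl
  rw [this]
  exact (sm_sC hN).inv (fun y hy => sC_ne_zero hN hy)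

lemma Sm.dop (hg : Sm g) (μ : Fin N → ℝ) (i : Fin N) : Sm (Dop μ i g) := by
  have h1 : Sm (pdv i g) := hg.pd i
  have h2 : Sm (fun y => ((μ i : ℂ) / cdv i y) * (g y - Rop i g y)) := by
    have hinv : Sm (fun y => (cdv i y)⁻¹) :=
      ContDiffOn.inv (Sm.cd i) (fun y hy => cdv_ne_zero hy)
    have h3 : Sm (fun y => (μ i : ℂ) * (cdv i y)⁻¹ * (g y - Rop i g y)) :=
      (hinv.constMul _).mul (hg.sub (hg.rop i))
    exact h3.congrU (fun y hy => by rw [div_eq_mul_inv])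
  exact (h1.add h2).congrU (fun y hy => rfl)

end SmLemmas2
section PdLemmas

open ContDiff

variable {g h : (Fin N → ℝ) → ℂ} {x : Fin N → ℝ} {i j m : Fin N} {c : ℂ}

lemma pd_congrU (h' : ∀ y ∈ Udom N, g y = h y) (hx : x ∈ Udom N) :
    pdv i g x = pdv i h x := by
  have he : g =ᶠ[nhds x] h := Filter.eventuallyEq_of_mem (Udom_mem_nhds hx) h'
  unfold pdv
  rw [he.fderiv_eq]

lemma pd_add (hg : DifferentiableAt ℝ g x) (hh : DifferentiableAt ℝ h x) :
    pdv i (fun y => g y + h y) x = pdv i g x + pdv i h x := by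
  unfold pdv
  rw [fderiv_fun_add hg hh]
  simp

lemma pd_sub (hg : DifferentiableAt ℝ g x) (hh : DifferentiableAt ℝ h x) :
    pdv i (fun y => g y - h y) x = pdv i g x - pdv i h x := by
  unfold pdv
  rw [fderiv_fun_sub hg hh]
  simp

lemma pd_const_mul (hg : DifferentiableAt ℝ g x) :
    pdv i (fun y => c * g y) x = c * pdv i g x := by
  unfold pdv
  rw [fderiv_const_mul hg]
  simp

lemma pd_const : pdv i (fun _ => c) x = 0 := by
  unfold pdv
  simp

lemma pd_mul (hg : DifferentiableAt ℝ g x) (hh : DifferentiableAt ℝ h x) :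
    pdv i (fun y => g y * h y) x = pdv i g x * h x + g x * pdv i h x := by
  unfold pdv
  rw [fderiv_fun_mul hg hh]
  simp
  ring

lemma pd_sum {s : Finset (Fin N)} {F : Fin N → (Fin N → ℝ) → ℂ}
    (hF : ∀ j ∈ s, DifferentiableAt ℝ (F j) x) :
    pdv i (fun y => ∑ j ∈ s, F j y) x = ∑ j ∈ s, pdv i (F j) x := by
  unfold pdv
  rw [fderiv_fun_sum hF]
  simp

lemma pd_cd : pdv i (cdv m) x = if i = m then 1 else 0 := by
  have : (cdv (N := N) m) =
      ⇑(Complex.ofRealCLM.comp (ContinuousLinearMap.proj m : (Fin N → ℝ) →L[ℝ] ℝ)) := rfl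
  rw [pdv, this, ContinuousLinearMap.fderiv]
  simp [ContinuousLinearMap.proj, Pi.single_apply, eq_comm]
  split <;> simp

lemma pd_flip (hg : DifferentiableAt ℝ g (flipC j x)) :
    pdv i (fun y => g (flipC j y)) x = (if i = j then -1 else 1) * pdv i g (flipC j x) := by
  have hcomp : (fun y => g (flipC j y)) = g ∘ ⇑(flipL j) := by
    funext y; simp [Function.comp, flipL_apply]
  have hdf : DifferentiableAt ℝ (⇑(flipL j)) x := (flipL j).differentiableAt
  have hg' : DifferentiableAt ℝ g (flipL j x) := by rwa [flipL_apply]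
  unfold pdv
  rw [hcomp, fderiv_comp x hg' hdf, (flipL j).fderiv]
  simp only [ContinuousLinearMap.coe_comp', Function.comp_apply, flipL_apply]
  rcases eq_or_ne i j with rfl | hij
  · rw [show flipC i (Pi.single i 1) = -Pi.single i (1:ℝ) from by
      rw [← flipL_apply]; exact flipL_single_self i]
    simp
  · rw [show flipC j (Pi.single i 1) = Pi.single i (1:ℝ) from by
      rw [← flipL_apply]; exact flipL_single_ne j i hij]
    simp [hij]

lemma pd_comm (hg : Sm g) (hx : x ∈ Udom N) :
    pdv i (pdv j g) x = pdv j (pdv i g) x := by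
  have hca : ContDiffAt ℝ ∞ g x := hg.contAt hx
  have hsym : IsSymmSndFDerivAt ℝ g x :=
    hca.isSymmSndFDerivAt (by simp; exact WithTop.coe_le_coe.2 le_top)
  have hd : DifferentiableAt ℝ (fderiv ℝ g) x := by
    have h1 : ContDiffOn ℝ ∞ (fderiv ℝ g) (Udom N) :=
      hg.fderiv_of_isOpen isOpen_Udom (by simp)
    exact (h1.contDiffAt (Udom_mem_nhds hx)).differentiableAt (by simp)
  have e : ∀ a b : Fin N, pdv a (pdv b g) x =
      fderiv ℝ (fderiv ℝ g) x (Pi.single a 1) (Pi.single b 1) := by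
    intro a b
    unfold pdv
    rw [fderiv_clm_apply hd (differentiableAt_const _)]
    simp
  rw [e i j, e j i, hsym (Pi.single i 1) (Pi.single j 1)]

end PdLemmas

section NrmCalc

open ContDiff

variable {x : Fin N → ℝ} {i j m : Fin N}

lemma sC_sq (x : Fin N → ℝ) : sC x * sC x = ∑ j, cdv j x * cdv j x := by
  have h : nrm x * nrm x = ∑ j, x j * x j := by
    have h0 : (0:ℝ) ≤ ∑ j, (x j)^2 := Finset.sum_nonneg (fun j _ => sq_nonneg _)
    have := Real.mul_self_sqrt h0
    rw [nrm, this]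
    apply Finset.sum_congr rfl
    intro j _
    ring
  simp only [sC, cdv]
  rw [show ((nrm x : ℝ):ℂ) * ((nrm x : ℝ):ℂ) = ((nrm x * nrm x : ℝ) : ℂ) by push_cast; ring, h]
  push_cast
  ring

lemma cdv_flip : cdv m (flipC j x) = (if m = j then -1 else 1) * cdv m x := by
  rcases eq_or_ne m j with rfl | h
  · simp [cdv]
  · simp [cdv, flipC_apply_ne _ _ _ h, h]

lemma uC_flip : uC (flipC j x) = uC x := by
  simp [uC, nrm_flipC]

lemma sC_flip : sC (flipC j x) = sC x := by
  simp [sC, nrm_flipC]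

lemma pd_sC (hN : 0 < N) (hx : x ∈ Udom N) : pdv i sC x = cdv i x * uC x := by
  have hds : DifferentiableAt ℝ (sC (N := N)) x := (sm_sC hN).diffAt hx
  have h1 : pdv i (fun y => sC y * sC y) x = pdv i (fun y => ∑ j, cdv j y * cdv j y) x := by
    congr 1
    funext y
    exact sC_sq y
  rw [pd_mul hds hds, pd_sum (fun j _ => ((Sm.cd j).diffAt hx).fun_mul ((Sm.cd j).diffAt hx))] at h1
  have h2 : ∀ j, pdv i (fun y => cdv j y * cdv j y) x = 2 * (if i = j then 1 else 0) * cdv j x := by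
    intro j
    rw [pd_mul ((Sm.cd j).diffAt hx) ((Sm.cd j).diffAt hx), pd_cd]
    ring
  have h3 : (∑ j, pdv i (fun y => cdv j y * cdv j y) x) = 2 * cdv i x := by
    rw [Finset.sum_congr rfl (fun j _ => h2 j)]
    simp [mul_ite, ite_mul]
  rw [h3] at h1
  have hsne : sC x ≠ 0 := sC_ne_zero hN hx
  have hgoal : pdv i sC x * sC x = cdv i x := by linear_combination h1 / 2
  have hu : uC x = (sC x)⁻¹ := rfl
  rw [hu]
  field_simp
  linear_combination hgoal

lemma pd_uC (hN : 0 < N) (hx : x ∈ Udom N) :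
    pdv i uC x = -(cdv i x) * uC x ^ 3 := by
  have hdu : DifferentiableAt ℝ (uC (N := N)) x := (sm_uC hN).diffAt hx
  have hds : DifferentiableAt ℝ (sC (N := N)) x := (sm_sC hN).diffAt hx
  have hsne : sC x ≠ 0 := sC_ne_zero hN hx
  have h1 : pdv i (fun y => uC y * sC y) x = pdv i (fun _ => (1:ℂ)) x := by
    apply pd_congrU _ hx
    intro y hy
    exact inv_mul_cancel₀ (sC_ne_zero hN hy)
  rw [pd_mul hdu hds, pd_const, pd_sC hN hx] at h1
  have h2 : pdv i uC x * sC x = -(cdv i x * (uC x * uC x)) := by linear_combination h1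
  have hsu : sC x * uC x = 1 := mul_inv_cancel₀ hsne
  calc pdv i uC x = pdv i uC x * (sC x * uC x) := by rw [hsu, mul_one]
    _ = (pdv i uC x * sC x) * uC x := by ring
    _ = -(cdv i x) * uC x ^ 3 := by rw [h2]; ring

end NrmCalc

section DopLemmas

open ContDiff

variable {μ : Fin N → ℝ} {g h : (Fin N → ℝ) → ℂ} {a : (Fin N → ℝ) → ℂ}
  {x : Fin N → ℝ} {i j m : Fin N} {c : ℂ}

lemma Rop_eq (j : Fin N) (g : (Fin N → ℝ) → ℂ) : Rop j g = fun y => g (flipC j y) := rfl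

lemma Dop_def (μ : Fin N → ℝ) (i : Fin N) (g : (Fin N → ℝ) → ℂ) (x : Fin N → ℝ) :
    Dop μ i g x = pdv i g x + ((μ i : ℂ) / cdv i x) * (g x - g (flipC i x)) := rfl

lemma Dop_congrU (h' : ∀ y ∈ Udom N, g y = h y) (hx : x ∈ Udom N) :
    Dop μ i g x = Dop μ i h x := by
  rw [Dop_def, Dop_def, pd_congrU h' hx, h' x hx, h' _ (flipC_mem_Udom hx)]

lemma Dop_add (hg : DifferentiableAt ℝ g x) (hh : DifferentiableAt ℝ h x) :
    Dop μ i (fun y => g y + h y) x = Dop μ i g x + Dop μ i h x := by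
  simp only [Dop_def, pd_add hg hh]
  ring

lemma Dop_const_mul (hg : DifferentiableAt ℝ g x) :
    Dop μ i (fun y => c * g y) x = c * Dop μ i g x := by
  simp only [Dop_def, pd_const_mul hg]
  ring

lemma Dop_sum {s : Finset (Fin N)} {F : Fin N → (Fin N → ℝ) → ℂ}
    (hF : ∀ j ∈ s, DifferentiableAt ℝ (F j) x) :
    Dop μ i (fun y => ∑ j ∈ s, F j y) x = ∑ j ∈ s, Dop μ i (F j) x := by
  simp only [Dop_def, pd_sum hF]
  rw [Finset.sum_add_distrib]
  congr 1
  rw [← Finset.sum_sub_distrib, Finset.mul_sum]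

lemma Dop_prod (ha : DifferentiableAt ℝ a x) (hg : DifferentiableAt ℝ g x) :
    Dop μ j (fun y => a y * g y) x = pdv j a x * g x + a x * Dop μ j g x
      + ((μ j : ℂ) / cdv j x) * (a x - a (flipC j x)) * g (flipC j x) := by
  simp only [Dop_def, pd_mul ha hg]
  ring

lemma sm_mucd (c : ℂ) (j : Fin N) : Sm (fun y : Fin N → ℝ => c / cdv j y) := by
  have hinv : Sm (fun y : Fin N → ℝ => (cdv j y)⁻¹) :=
    ContDiffOn.inv (Sm.cd j) (fun y hy => cdv_ne_zero hy)
  exact (hinv.constMul c).congrU (fun y hy => by rw [div_eq_mul_inv])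

lemma pd_inv_cd (hx : x ∈ Udom N) (hij : i ≠ j) :
    pdv i (fun y : Fin N → ℝ => c / cdv j y) x = 0 := by
  have hinv : Sm (fun y : Fin N → ℝ => (cdv j y)⁻¹) :=
    ContDiffOn.inv (Sm.cd j) (fun y hy => cdv_ne_zero hy)
  have h1 : pdv i (fun y : Fin N → ℝ => (cdv j y)⁻¹ * cdv j y) x = 0 := by
    rw [pd_congrU (h := fun _ => (1:ℂ)) (fun y hy => inv_mul_cancel₀ (cdv_ne_zero hy)) hx]
    exact pd_const
  rw [pd_mul (hinv.diffAt hx) ((Sm.cd j).diffAt hx), pd_cd] at h1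
  simp only [if_neg hij, mul_zero, add_zero] at h1
  have hinv0 : pdv i (fun y : Fin N → ℝ => (cdv j y)⁻¹) x = 0 := by
    rcases mul_eq_zero.1 h1 with h | h
    · exact h
    · exact absurd h (cdv_ne_zero hx)
  have : (fun y : Fin N → ℝ => c / cdv j y) = fun y => c * (cdv j y)⁻¹ := by
    funext y; rw [div_eq_mul_inv]
  rw [this, pd_const_mul (hinv.diffAt hx), hinv0, mul_zero]

lemma pd_Dop (hg : Sm g) (hx : x ∈ Udom N) (hij : i ≠ j) :
    pdv i (Dop μ j g) x = pdv i (pdv j g) x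
      + ((μ j : ℂ) / cdv j x) * (pdv i g x - pdv i g (flipC j x)) := by
  have hxj : flipC j x ∈ Udom N := flipC_mem_Udom hx
  have hd1 : DifferentiableAt ℝ (pdv j g) x := (hg.pd j).diffAt hx
  have ha : Sm (fun y : Fin N → ℝ => (μ j : ℂ) / cdv j y) := sm_mucd _ j
  have hsub : Sm (fun y => g y - Rop j g y) := hg.sub (hg.rop j)
  have hDrw : Dop μ j g = fun y => pdv j g y +
      (fun z : Fin N → ℝ => (μ j : ℂ) / cdv j z) y * (fun z => g z - Rop j g z) y := rfl
  rw [hDrw, pd_add hd1 ((ha.diffAt hx).fun_mul (hsub.diffAt hx)),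
    pd_mul (ha.diffAt hx) (hsub.diffAt hx), pd_inv_cd hx hij,
    pd_sub (hg.diffAt hx) ((hg.rop j).diffAt hx)]
  rw [show pdv i (Rop j g) x = (if i = j then -1 else 1) * pdv i g (flipC j x) from by
    rw [Rop_eq]; exact pd_flip (hg.diffAt hxj)]
  simp only [if_neg hij]
  ring

lemma Rop_Dop (hg : Sm g) (hx : x ∈ Udom N) :
    Rop j (Dop μ m g) x = (if j = m then -1 else 1) * Dop μ m (Rop j g) x := by
  have hxj : flipC j x ∈ Udom N := flipC_mem_Udom hx
  have hgσ : DifferentiableAt ℝ g (flipC j x) := hg.diffAt hxj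
  have hpd : pdv m (Rop j g) x = (if m = j then -1 else 1) * pdv m g (flipC j x) := by
    rw [Rop_eq]; exact pd_flip hgσ
  have hRR : Rop j g (flipC m x) = g (flipC j (flipC m x)) := rfl
  have hLHS : Rop j (Dop μ m g) x = Dop μ m g (flipC j x) := rfl
  rw [hLHS, Dop_def, Dop_def, hpd, hRR, cdv_flip (m := m) (j := j), flipC_comm]
  rcases eq_or_ne j m with rfl | hjm
  · simp only [if_pos rfl, Rop_eq, eq_self_iff_true, ↓reduceIte]
    have hc : cdv j x ≠ 0 := cdv_ne_zero hx
    field_simp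
    have h2 : cdv j x * (cdv j x)⁻¹ = 1 := mul_inv_cancel₀ hc
    linear_combination
  · simp only [if_neg hjm, if_neg (Ne.symm hjm), Rop_eq]
    ring

lemma Dop_comm (hg : Sm g) (hx : x ∈ Udom N) :
    Dop μ i (Dop μ j g) x = Dop μ j (Dop μ i g) x := by
  rcases eq_or_ne i j with rfl | hij
  · rfl
  have hxi : flipC i x ∈ Udom N := flipC_mem_Udom hx
  have hxj : flipC j x ∈ Udom N := flipC_mem_Udom hx
  have e1 : Dop μ i (Dop μ j g) x = pdv i (Dop μ j g) x
      + ((μ i : ℂ) / cdv i x) * (Dop μ j g x - Dop μ j g (flipC i x)) := rfl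
  have e2 : Dop μ j (Dop μ i g) x = pdv j (Dop μ i g) x
      + ((μ j : ℂ) / cdv j x) * (Dop μ i g x - Dop μ i g (flipC j x)) := rfl
  rw [e1, e2, pd_Dop hg hx hij, pd_Dop hg hx (Ne.symm hij),
    Dop_def μ j g x, Dop_def μ i g x, Dop_def μ j g (flipC i x), Dop_def μ i g (flipC j x)]
  rw [cdv_flip (m := j) (j := i), cdv_flip (m := i) (j := j),
    if_neg (Ne.symm hij), if_neg hij, pd_comm hg hx,
    show flipC j (flipC i x) = flipC i (flipC j x) from flipC_comm j i x]
  ring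

end DopLemmas

/-! ### Layer 4: the Dunkl Laplacian -/

/-- Dunkl Laplacian -/
def lapD (μ : Fin N → ℝ) (g : (Fin N → ℝ) → ℂ) : (Fin N → ℝ) → ℂ :=
  fun x => ∑ j, Dop μ j (Dop μ j g) x

section LapLemmas

open ContDiff

variable {μ : Fin N → ℝ} {g h : (Fin N → ℝ) → ℂ} {x : Fin N → ℝ} {i j m : Fin N} {c : ℂ}

lemma Sm.lap (hg : Sm g) (μ : Fin N → ℝ) : Sm (lapD μ g) :=
  Sm.sum (fun j _ => (hg.dop μ j).dop μ j)

lemma lap_congrU (h' : ∀ y ∈ Udom N, g y = h y) (hx : x ∈ Udom N) :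
    lapD μ g x = lapD μ h x := by
  apply Finset.sum_congr rfl
  intro j _
  exact Dop_congrU (fun y hy => Dop_congrU h' hy) hx

lemma lap_add (hg : Sm g) (hh : Sm h) (hx : x ∈ Udom N) :
    lapD μ (fun y => g y + h y) x = lapD μ g x + lapD μ h x := by
  simp only [lapD]
  rw [← Finset.sum_add_distrib]
  apply Finset.sum_congr rfl
  intro j _
  rw [Dop_congrU (h := fun y => Dop μ j g y + Dop μ j h y)
    (fun y hy => Dop_add (hg.diffAt hy) (hh.diffAt hy)) hx]
  exact Dop_add ((hg.dop μ j).diffAt hx) ((hh.dop μ j).diffAt hx)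

lemma lap_const_mul (hg : Sm g) (hx : x ∈ Udom N) :
    lapD μ (fun y => c * g y) x = c * lapD μ g x := by
  simp only [lapD]
  rw [Finset.mul_sum]
  apply Finset.sum_congr rfl
  intro j _
  rw [Dop_congrU (h := fun y => c * Dop μ j g y)
    (fun y hy => Dop_const_mul (hg.diffAt hy)) hx]
  exact Dop_const_mul ((hg.dop μ j).diffAt hx)

lemma lap_sum {s : Finset (Fin N)} {F : Fin N → (Fin N → ℝ) → ℂ}
    (hF : ∀ j ∈ s, Sm (F j)) (hx : x ∈ Udom N) :
    lapD μ (fun y => ∑ j ∈ s, F j y) x = ∑ j ∈ s, lapD μ (F j) x := by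
  simp only [lapD]
  have h1 : ∀ j : Fin N, Dop μ j (Dop μ j fun y => ∑ k ∈ s, F k y) x
      = ∑ k ∈ s, Dop μ j (Dop μ j (F k)) x := by
    intro j
    rw [Dop_congrU (h := fun y => ∑ k ∈ s, Dop μ j (F k) y)
      (fun y hy => Dop_sum (fun k hk => (hF k hk).diffAt hy)) hx]
    exact Dop_sum (fun k hk => ((hF k hk).dop μ j).diffAt hx)
  rw [Finset.sum_congr rfl (fun j _ => h1 j), Finset.sum_comm]

lemma lap_Dcomm (hg : Sm g) (hx : x ∈ Udom N) :
    lapD μ (Dop μ m g) x = Dop μ m (lapD μ g) x := by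
  have h1 : Dop μ m (lapD μ g) x = ∑ j, Dop μ m (Dop μ j (Dop μ j g)) x :=
    Dop_sum (fun j _ => (((hg.dop μ j).dop μ j).diffAt hx))
  rw [h1]
  apply Finset.sum_congr rfl
  intro j _
  calc Dop μ j (Dop μ j (Dop μ m g)) x
      = Dop μ j (Dop μ m (Dop μ j g)) x := by
        exact Dop_congrU (fun y hy => Dop_comm hg hy) hx
    _ = Dop μ m (Dop μ j (Dop μ j g)) x := Dop_comm (hg.dop μ j) hx

lemma Rop_lap (hg : Sm g) (hx : x ∈ Udom N) :
    Rop m (lapD μ g) x = lapD μ (Rop m g) x := by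
  have h0 : Rop m (lapD μ g) x = ∑ j, Rop m (Dop μ j (Dop μ j g)) x := by
    simp only [Rop_eq, lapD]
  rw [h0]
  apply Finset.sum_congr rfl
  intro j _
  have e : (if m = j then (-1:ℂ) else 1) * (if m = j then (-1:ℂ) else 1) = 1 := by
    split <;> norm_num
  calc Rop m (Dop μ j (Dop μ j g)) x
      = (if m = j then -1 else 1) * Dop μ j (Rop m (Dop μ j g)) x := Rop_Dop (hg.dop μ j) hx
    _ = (if m = j then -1 else 1) * ((if m = j then -1 else 1) * Dop μ j (Dop μ j (Rop m g)) x) := by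
        congr 1
        rw [Dop_congrU (h := fun y => (if m = j then (-1:ℂ) else 1) * Dop μ j (Rop m g) y)
          (fun y hy => Rop_Dop hg hy) hx]
        exact Dop_const_mul (((hg.rop m).dop μ j).diffAt hx)
    _ = Dop μ j (Dop μ j (Rop m g)) x := by rw [← mul_assoc, e, one_mul]

end LapLemmas

section ProdRules

open ContDiff

variable {μ : Fin N → ℝ} {g h : (Fin N → ℝ) → ℂ} {x : Fin N → ℝ} {i j m : Fin N} {c : ℂ}

lemma diff_cdv (m : Fin N) (x : Fin N → ℝ) : DifferentiableAt ℝ (cdv (N := N) m) x :=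
  ((contDiff_cdv m).differentiable (by simp)).differentiableAt

lemma Dop_cdMul (hg : DifferentiableAt ℝ g x) (hx : x ∈ Udom N) :
    Dop μ j (fun y => cdv m y * g y) x
      = (if j = m then 1 else 0) * (g x + 2 * (μ j : ℂ) * g (flipC j x))
        + cdv m x * Dop μ j g x := by
  rw [Dop_prod (diff_cdv m x) hg, pd_cd, cdv_flip]
  rcases eq_or_ne j m with rfl | hjm
  · have hc : cdv j x ≠ 0 := cdv_ne_zero hx
    simp only [if_pos rfl, eq_self_iff_true, ↓reduceIte]
    field_simp
    ring
  · simp only [if_neg hjm, if_neg (Ne.symm hjm)]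
    ring

lemma sm_uC3 (hN : 0 < N) : Sm (fun y : Fin N → ℝ => uC y ^ 3) := by
  have h := ((sm_uC hN).mul ((sm_uC hN).mul (sm_uC hN)))
  exact h.congrU (fun y hy => by ring)

lemma pd_uC3 (hN : 0 < N) (hx : x ∈ Udom N) :
    pdv i (fun y => uC y ^ 3) x = -3 * cdv i x * uC x ^ 5 := by
  have hdu : DifferentiableAt ℝ (uC (N := N)) x := (sm_uC hN).diffAt hx
  have hdu2 : DifferentiableAt ℝ (fun y => uC y * uC y) x := hdu.mul hdu
  have h1 : pdv i (fun y => uC y ^ 3) x = pdv i (fun y => uC y * (uC y * uC y)) x := by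
    apply pd_congrU _ hx
    intro y hy
    ring
  rw [h1, pd_mul hdu hdu2, pd_mul hdu hdu, pd_uC hN hx]
  ring

lemma Dop_uCMul (hN : 0 < N) (hg : DifferentiableAt ℝ g x) (hx : x ∈ Udom N) :
    Dop μ j (fun y => uC y * g y) x
      = -(cdv j x * uC x ^ 3) * g x + uC x * Dop μ j g x := by
  rw [Dop_prod ((sm_uC hN).diffAt hx) hg, pd_uC hN hx, uC_flip]
  ring

lemma Dop_uC3Mul (hN : 0 < N) (hg : DifferentiableAt ℝ g x) (hx : x ∈ Udom N) :
    Dop μ j (fun y => uC y ^ 3 * g y) x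
      = -3 * cdv j x * uC x ^ 5 * g x + uC x ^ 3 * Dop μ j g x := by
  rw [Dop_prod ((sm_uC3 hN).diffAt hx) hg, pd_uC3 hN hx]
  rw [show uC (flipC j x) ^ 3 = uC x ^ 3 from by rw [uC_flip]]
  ring

lemma lap_cdMul (hg : Sm g) (hx : x ∈ Udom N) :
    lapD μ (fun y => cdv m y * g y) x = cdv m x * lapD μ g x + 2 * Dop μ m g x := by
  simp only [lapD]
  have h1 : ∀ j : Fin N, Dop μ j (Dop μ j fun y => cdv m y * g y) x
      = (if j = m then 1 else 0) *
          (Dop μ j g x + 2 * (μ j : ℂ) * Dop μ j (Rop j g) x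
            + Dop μ j g x + 2 * (μ j : ℂ) * Rop j (Dop μ j g) x)
        + cdv m x * Dop μ j (Dop μ j g) x := by
    intro j
    have hstep : ∀ y ∈ Udom N, Dop μ j (fun z => cdv m z * g z) y
        = (if j = m then 1 else 0) * (g y + 2 * (μ j : ℂ) * Rop j g y)
          + cdv m y * Dop μ j g y := by
      intro y hy
      rw [Dop_cdMul (hg.diffAt hy) hy]
      rfl
    rw [Dop_congrU hstep hx]
    have hd1 : DifferentiableAt ℝ
        (fun y => (if j = m then (1:ℂ) else 0) * (g y + 2 * (μ j : ℂ) * Rop j g y)) x := by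
      apply DifferentiableAt.const_mul
      exact (hg.diffAt hx).add (((hg.rop j).diffAt hx).const_mul _)
    have hd2 : DifferentiableAt ℝ (fun y => cdv m y * Dop μ j g y) x :=
      (diff_cdv m x).mul ((hg.dop μ j).diffAt hx)
    rw [show (fun y => (if j = m then (1:ℂ) else 0) * (g y + 2 * (μ j:ℂ) * Rop j g y)
          + cdv m y * Dop μ j g y)
        = fun y => ((fun z => (if j = m then (1:ℂ) else 0) * (g z + 2 * (μ j:ℂ) * Rop j g z)) y
          + (fun z => cdv m z * Dop μ j g z) y) from rfl]
    rw [Dop_add hd1 hd2]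
    rw [Dop_const_mul ((hg.diffAt hx).fun_add (((hg.rop j).diffAt hx).const_mul _))]
    rw [show (fun y => g y + 2 * (μ j:ℂ) * Rop j g y)
        = fun y => (g y + (fun z => (2 * (μ j:ℂ)) * Rop j g z) y) from by
      funext y; ring_nf]
    rw [Dop_add (hg.diffAt hx) (((hg.rop j).diffAt hx).const_mul _),
      Dop_const_mul ((hg.rop j).diffAt hx),
      Dop_cdMul ((hg.dop μ j).diffAt hx) hx]
    rw [show Dop μ j g (flipC j x) = Rop j (Dop μ j g) x from rfl]
    ring
  rw [Finset.sum_congr rfl (fun j _ => h1 j)]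
  rw [Finset.sum_add_distrib]
  have h2 : ∀ j : Fin N, Dop μ j (Rop j g) x = - Rop j (Dop μ j g) x := by
    intro j
    have := Rop_Dop (μ := μ) (j := j) (m := j) hg hx
    simp only [if_pos (rfl : j = j), eq_self_iff_true, if_true] at this
    rw [this]
    ring
  have h3 : (∑ j, (if j = m then (1:ℂ) else 0) *
      (Dop μ j g x + 2 * (μ j : ℂ) * Dop μ j (Rop j g) x
        + Dop μ j g x + 2 * (μ j : ℂ) * Rop j (Dop μ j g) x)) = 2 * Dop μ m g x := by
    rw [Finset.sum_eq_single m]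
    · rw [if_pos rfl, h2 m]
      ring
    · intro b _ hb
      rw [if_neg hb, zero_mul]
    · intro hm
      exact absurd (Finset.mem_univ m) hm
  rw [h3, ← Finset.mul_sum]
  ring

end ProdRules

section LapU

open ContDiff

variable {μ : Fin N → ℝ} {g h : (Fin N → ℝ) → ℂ} {x : Fin N → ℝ} {i j m : Fin N}

lemma lap_uCMul (hN : 0 < N) (hg : Sm g) (hx : x ∈ Udom N) :
    lapD μ (fun y => uC y * g y) x = uC x * lapD μ g x
      - 2 * uC x ^ 3 * ∑ j, cdv j x * Dop μ j g x
      + (3 - (N : ℂ)) * uC x ^ 3 * g x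
      - 2 * uC x ^ 3 * ∑ j, (μ j : ℂ) * Rop j g x := by
  have hsmu3g : Sm (fun z => uC z ^ 3 * g z) := (sm_uC3 hN).mul hg
  have h1 : ∀ j : Fin N, Dop μ j (Dop μ j fun y => uC y * g y) x
      = uC x * Dop μ j (Dop μ j g) x
        + (-2 * uC x ^ 3) * (cdv j x * Dop μ j g x)
        + (3 * uC x ^ 5 * g x) * (cdv j x * cdv j x)
        + (-(uC x ^ 3 * g x))
        + (-2 * uC x ^ 3) * ((μ j : ℂ) * Rop j g x) := by
    intro j
    have hstep : ∀ y ∈ Udom N, Dop μ j (fun z => uC z * g z) y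
        = (fun z => (-1 : ℂ) * (cdv j z * (uC z ^ 3 * g z))) y
          + (fun z => uC z * Dop μ j g z) y := by
      intro y hy
      rw [Dop_uCMul hN (hg.diffAt hy) hy]
      ring
    rw [Dop_congrU hstep hx]
    have hdA : DifferentiableAt ℝ (fun z => (-1:ℂ) * (cdv j z * (uC z ^ 3 * g z))) x :=
      (((diff_cdv j x).mul (hsmu3g.diffAt hx))).const_mul _
    have hdB : DifferentiableAt ℝ (fun z => uC z * Dop μ j g z) x :=
      ((sm_uC hN).diffAt hx).mul ((hg.dop μ j).diffAt hx)
    rw [Dop_add hdA hdB,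
      Dop_const_mul ((diff_cdv j x).fun_mul (hsmu3g.diffAt hx)),
      Dop_cdMul (hsmu3g.diffAt hx) hx,
      Dop_uC3Mul hN (hg.diffAt hx) hx,
      Dop_uCMul hN ((hg.dop μ j).diffAt hx) hx]
    rw [show uC (flipC j x) = uC x from uC_flip, if_pos rfl,
      show g (flipC j x) = Rop j g x from rfl]
    ring
  simp only [lapD]
  rw [Finset.sum_congr rfl (fun j _ => h1 j)]
  have hsC : (∑ j, cdv j x * cdv j x) = sC x * sC x := (sC_sq x).symm
  have hsne : sC x ≠ 0 := sC_ne_zero hN hx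
  have hsu : sC x * uC x = 1 := mul_inv_cancel₀ hsne
  have hu5 : uC x ^ 5 * (sC x * sC x) = uC x ^ 3 := by
    calc uC x ^ 5 * (sC x * sC x) = uC x ^ 3 * (sC x * uC x) * (sC x * uC x) := by ring
      _ = uC x ^ 3 := by rw [hsu]; ring
  simp only [Finset.sum_add_distrib, ← Finset.mul_sum, Finset.sum_const, Finset.card_univ,
    Fintype.card_fin, nsmul_eq_mul, hsC]
  linear_combination (3 * g x) * hu5

end LapU

/-! ### Layer 5: normal form of the LRL operator -/

/-- The operator `G` with `Âᵢ = -ℏ²G - k xᵢ/|x|` -/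
def Gop (μ : Fin N → ℝ) (i : Fin N) (g : (Fin N → ℝ) → ℂ) : (Fin N → ℝ) → ℂ :=
  fun x => cdv i x * lapD μ g x - (∑ j, cdv j x * Dop μ j (Dop μ i g) x)
    + ((1 - (N : ℂ)) / 2) * Dop μ i g x - ∑ j, (μ j : ℂ) * Rop j (Dop μ i g) x

section S1

open ContDiff

variable {μ : Fin N → ℝ} {hb k : ℝ} {f g : (Fin N → ℝ) → ℂ} {x : Fin N → ℝ} {i j m : Fin N}

lemma Sm.gop (hf : Sm f) (μ : Fin N → ℝ) (i : Fin N) : Sm (Gop μ i f) := by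
  have h1 : Sm (fun y => cdv i y * lapD μ f y) := (Sm.cd i).mul (hf.lap μ)
  have h2 : Sm (fun y => ∑ j, cdv j y * Dop μ j (Dop μ i f) y) :=
    Sm.sum (fun j _ => (Sm.cd j).mul ((hf.dop μ i).dop μ j))
  have h3 : Sm (fun y => ((1 - (N:ℂ))/2) * Dop μ i f y) := (hf.dop μ i).constMul _
  have h4 : Sm (fun y => ∑ j, (μ j : ℂ) * Rop j (Dop μ i f) y) :=
    Sm.sum (fun j _ => ((hf.dop μ i).rop j).constMul _)
  exact ((h1.sub h2).add h3).sub h4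

lemma Pop_eq (μ : Fin N → ℝ) (hb : ℝ) (j : Fin N) (g : (Fin N → ℝ) → ℂ) (x : Fin N → ℝ) :
    Pop μ hb j g x = -(Complex.I * (hb:ℂ)) * Dop μ j g x := rfl

/-- Structure lemma: the LRL component in normal form. -/
lemma Alrl_eq (hf : Sm f) (hx : x ∈ Udom N) :
    Alrl μ hb k i f x = -(hb:ℂ)^2 * Gop μ i f x - (k:ℂ) * (cdv i x * (uC x * f x)) := by
  set c : ℂ := -(Complex.I * (hb:ℂ)) with hc
  -- Term 1: Lam i j (Pop j f) x
  have hT1 : ∀ j : Fin N, Lam μ hb i j (Pop μ hb j f) x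
      = c^2 * (cdv i x * Dop μ j (Dop μ j f) x - cdv j x * Dop μ j (Dop μ i f) x) := by
    intro j
    have e1 : Dop μ j (Pop μ hb j f) x = c * Dop μ j (Dop μ j f) x := by
      rw [show Pop μ hb j f = fun y => c * Dop μ j f y from rfl]
      exact Dop_const_mul ((hf.dop μ j).diffAt hx)
    have e2 : Dop μ i (Pop μ hb j f) x = c * Dop μ i (Dop μ j f) x := by
      rw [show Pop μ hb j f = fun y => c * Dop μ j f y from rfl]
      exact Dop_const_mul ((hf.dop μ j).diffAt hx)
    have e3 : Dop μ i (Dop μ j f) x = Dop μ j (Dop μ i f) x := Dop_comm hf hx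
    show cdv i x * Pop μ hb j (Pop μ hb j f) x - cdv j x * Pop μ hb i (Pop μ hb j f) x = _
    rw [Pop_eq, Pop_eq, e1, e2, e3]
    ring
  -- Term 2: Pop j (Lam i j f) x
  have hT2 : ∀ j : Fin N, Pop μ hb j (Lam μ hb i j f) x
      = c^2 * ((if j = i then 1 else 0) * (Dop μ j f x + 2 * (μ j:ℂ) * Rop j (Dop μ j f) x)
          + cdv i x * Dop μ j (Dop μ j f) x
          - (Dop μ i f x + 2 * (μ j:ℂ) * Rop j (Dop μ i f) x)
          - cdv j x * Dop μ j (Dop μ i f) x) := by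
    intro j
    have hlam : ∀ y ∈ Udom N, Lam μ hb i j f y
        = (fun z => c * (cdv i z * Dop μ j f z)) y
          + (fun z => (-c) * (cdv j z * Dop μ i f z)) y := by
      intro y hy
      show cdv i y * (c * Dop μ j f y) - cdv j y * (c * Dop μ i f y) = _
      ring
    have hd1 : DifferentiableAt ℝ (fun z => c * (cdv i z * Dop μ j f z)) x :=
      ((diff_cdv i x).mul ((hf.dop μ j).diffAt hx)).const_mul _
    have hd2 : DifferentiableAt ℝ (fun z => (-c) * (cdv j z * Dop μ i f z)) x :=
      ((diff_cdv j x).mul ((hf.dop μ i).diffAt hx)).const_mul _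
    rw [Pop_eq, Dop_congrU hlam hx, Dop_add hd1 hd2,
      Dop_const_mul ((diff_cdv i x).fun_mul ((hf.dop μ j).diffAt hx)),
      Dop_const_mul ((diff_cdv j x).fun_mul ((hf.dop μ i).diffAt hx)),
      Dop_cdMul ((hf.dop μ j).diffAt hx) hx,
      Dop_cdMul ((hf.dop μ i).diffAt hx) hx]
    rw [show Dop μ j f (flipC j x) = Rop j (Dop μ j f) x from rfl,
      show Dop μ i f (flipC j x) = Rop j (Dop μ i f) x from rfl, if_pos rfl]
    ring
  have hT12 : ∀ j : Fin N, Lam μ hb i j (Pop μ hb j f) x + Pop μ hb j (Lam μ hb i j f) x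
      = c^2 * ((fun j' => (if j' = i then (1:ℂ) else 0)
            * (Dop μ j' f x + 2 * (μ j':ℂ) * Rop j' (Dop μ j' f) x)) j
          + (fun j' => (2 * cdv i x) * Dop μ j' (Dop μ j' f) x
              - 2 * (cdv j' x * Dop μ j' (Dop μ i f) x)
              - Dop μ i f x
              - 2 * ((μ j':ℂ) * Rop j' (Dop μ i f) x)) j) := by
    intro j
    rw [hT1 j, hT2 j]
    ring
  have hδ : ∑ j, (if j = i then (1:ℂ) else 0)
      * (Dop μ j f x + 2 * (μ j:ℂ) * Rop j (Dop μ j f) x)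
      = Dop μ i f x + 2 * (μ i:ℂ) * Rop i (Dop μ i f) x := by
    rw [Finset.sum_eq_single i]
    · rw [if_pos rfl, one_mul]
    · intro b _ hb'; rw [if_neg hb', zero_mul]
    · intro hm; exact absurd (Finset.mem_univ i) hm
  have hother : ∑ j, ((2 * cdv i x) * Dop μ j (Dop μ j f) x
        - 2 * (cdv j x * Dop μ j (Dop μ i f) x)
        - Dop μ i f x
        - 2 * ((μ j:ℂ) * Rop j (Dop μ i f) x))
      = (2 * cdv i x) * lapD μ f x - 2 * (∑ j, cdv j x * Dop μ j (Dop μ i f) x)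
        - (N:ℂ) * Dop μ i f x - 2 * (∑ j, (μ j:ℂ) * Rop j (Dop μ i f) x) := by
    rw [Finset.sum_sub_distrib, Finset.sum_sub_distrib, Finset.sum_sub_distrib,
      ← Finset.mul_sum, ← Finset.mul_sum, ← Finset.mul_sum, Finset.sum_const,
      Finset.card_univ, Fintype.card_fin, nsmul_eq_mul]
    rfl
  have hsum : ∑ j, (Lam μ hb i j (Pop μ hb j f) x + Pop μ hb j (Lam μ hb i j f) x)
      = c^2 * ((Dop μ i f x + 2 * (μ i:ℂ) * Rop i (Dop μ i f) x)
        + ((2 * cdv i x) * lapD μ f x - 2 * (∑ j, cdv j x * Dop μ j (Dop μ i f) x)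
          - (N:ℂ) * Dop μ i f x - 2 * (∑ j, (μ j:ℂ) * Rop j (Dop μ i f) x))) := by
    rw [Finset.sum_congr rfl (fun j _ => hT12 j), ← Finset.mul_sum,
      Finset.sum_add_distrib, hδ, hother]
  have hlast : Complex.I * (hb:ℂ) * (μ i:ℂ) * Rop i (Pop μ hb i f) x
      = (hb:ℂ)^2 * ((μ i:ℂ) * Rop i (Dop μ i f) x) := by
    rw [show Rop i (Pop μ hb i f) x = c * Rop i (Dop μ i f) x from rfl, hc]
    have hI := Complex.I_sq
    linear_combination (-(hb:ℂ)^2 * (μ i:ℂ) * Rop i (Dop μ i f) x) * hI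
  have hc2 : c^2 = -(hb:ℂ)^2 := by
    rw [hc, show (-(Complex.I * (hb:ℂ)))^2 = Complex.I^2 * (hb:ℂ)^2 from by ring,
      Complex.I_sq]
    ring
  show (1/2 : ℂ) * ∑ j, (Lam μ hb i j (Pop μ hb j f) x + Pop μ hb j (Lam μ hb i j f) x)
      - (k:ℂ) * cdv i x * f x / ((nrm x : ℝ) : ℂ)
      + Complex.I * (hb:ℂ) * (μ i:ℂ) * Rop i (Pop μ hb i f) x = _
  rw [hsum, hlast, hc2,
    show (k:ℂ) * cdv i x * f x / ((nrm x : ℝ) : ℂ) = (k:ℂ) * (cdv i x * (uC x * f x)) from by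
      rw [div_eq_mul_inv, show (((nrm x : ℝ) : ℂ))⁻¹ = uC x from rfl]; ring,
    Gop]
  ring

end S1

section S2

open ContDiff

variable {μ : Fin N → ℝ} {f : (Fin N → ℝ) → ℂ} {x : Fin N → ℝ} {i j m : Fin N}

lemma lap_gop (hf : Sm f) (hx : x ∈ Udom N) :
    lapD μ (Gop μ i f) x = Gop μ i (lapD μ f) x := by
  have smA : Sm (fun z => cdv i z * lapD μ f z) := (Sm.cd i).mul (hf.lap μ)
  have smB : Sm (fun z => ((1 - (N:ℂ))/2) * Dop μ i f z) := (hf.dop μ i).constMul _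
  have smC0 : Sm (fun z => ∑ j, cdv j z * Dop μ j (Dop μ i f) z) :=
    Sm.sum (fun j _ => (Sm.cd j).mul ((hf.dop μ i).dop μ j))
  have smC : Sm (fun z => (-1:ℂ) * ∑ j, cdv j z * Dop μ j (Dop μ i f) z) := smC0.constMul _
  have smD0 : Sm (fun z => ∑ j, (μ j:ℂ) * Rop j (Dop μ i f) z) :=
    Sm.sum (fun j _ => ((hf.dop μ i).rop j).constMul _)
  have smD : Sm (fun z => (-1:ℂ) * ∑ j, (μ j:ℂ) * Rop j (Dop μ i f) z) := smD0.constMul _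
  have hG : ∀ y ∈ Udom N, Gop μ i f y =
      (cdv i y * lapD μ f y + ((1 - (N:ℂ))/2) * Dop μ i f y)
      + ((-1:ℂ) * (∑ j, cdv j y * Dop μ j (Dop μ i f) y)
        + (-1:ℂ) * (∑ j, (μ j:ℂ) * Rop j (Dop μ i f) y)) := by
    intro y hy
    simp only [Gop]
    ring
  rw [lap_congrU hG hx, lap_add (smA.add smB) (smC.add smD) hx,
    lap_add smA smB hx, lap_add smC smD hx,
    lap_cdMul (hf.lap μ) hx, lap_const_mul (hf.dop μ i) hx,
    lap_const_mul smC0 hx, lap_const_mul smD0 hx,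
    lap_sum (fun j _ => (Sm.cd j).mul ((hf.dop μ i).dop μ j)) hx,
    lap_sum (fun j _ => ((hf.dop μ i).rop j).constMul _) hx]
  have hBD : lapD μ (Dop μ i f) x = Dop μ i (lapD μ f) x := lap_Dcomm hf hx
  have hCj : ∀ j : Fin N, lapD μ (fun z => cdv j z * Dop μ j (Dop μ i f) z) x
      = cdv j x * Dop μ j (Dop μ i (lapD μ f)) x + 2 * Dop μ j (Dop μ j (Dop μ i f)) x := by
    intro j
    rw [lap_cdMul ((hf.dop μ i).dop μ j) hx]
    congr 2
    calc lapD μ (Dop μ j (Dop μ i f)) x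
        = Dop μ j (lapD μ (Dop μ i f)) x := lap_Dcomm (hf.dop μ i) hx
      _ = Dop μ j (Dop μ i (lapD μ f)) x :=
          Dop_congrU (fun y hy => lap_Dcomm hf hy) hx
  have hDj : ∀ j : Fin N, lapD μ (fun z => (μ j:ℂ) * Rop j (Dop μ i f) z) x
      = (μ j:ℂ) * Rop j (Dop μ i (lapD μ f)) x := by
    intro j
    rw [lap_const_mul ((hf.dop μ i).rop j) hx]
    congr 1
    calc lapD μ (Rop j (Dop μ i f)) x
        = Rop j (lapD μ (Dop μ i f)) x := (Rop_lap (hf.dop μ i) hx).symm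
      _ = lapD μ (Dop μ i f) (flipC j x) := rfl
      _ = Dop μ i (lapD μ f) (flipC j x) := lap_Dcomm hf (flipC_mem_Udom hx)
      _ = Rop j (Dop μ i (lapD μ f)) x := rfl
  rw [Finset.sum_congr rfl (fun j _ => hCj j), Finset.sum_congr rfl (fun j _ => hDj j),
    Finset.sum_add_distrib, hBD]
  have hlapsum : ∑ j, 2 * Dop μ j (Dop μ j (Dop μ i f)) x = 2 * Dop μ i (lapD μ f) x := by
    rw [← Finset.mul_sum, show (∑ j, Dop μ j (Dop μ j (Dop μ i f)) x) = lapD μ (Dop μ i f) x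
      from rfl, hBD]
  rw [hlapsum, Gop]
  ring

end S2

section S3

open ContDiff

variable {μ : Fin N → ℝ} {f : (Fin N → ℝ) → ℂ} {x : Fin N → ℝ} {i j m : Fin N}

lemma pot_comm (hN : 0 < N) (hf : Sm f) (hx : x ∈ Udom N) :
    (1/2 : ℂ) * lapD μ (fun y => cdv i y * (uC y * f y)) x + uC x * Gop μ i f x
      = Gop μ i (fun y => uC y * f y) x + (1/2 : ℂ) * (cdv i x * (uC x * lapD μ f x)) := by
  have smUF : Sm (fun y => uC y * f y) := (sm_uC hN).mul hf
  have smU3F : Sm (fun y => uC y ^ 3 * f y) := (sm_uC3 hN).mul hf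
  have hsne : sC x ≠ 0 := sC_ne_zero hN hx
  have hsu : sC x * uC x = 1 := mul_inv_cancel₀ hsne
  have hu3 : uC x ^ 3 * (sC x * sC x) = uC x := by
    calc uC x ^ 3 * (sC x * sC x) = uC x * (sC x * uC x) * (sC x * uC x) := by ring
      _ = uC x := by rw [hsu]; ring
  have hu5 : uC x ^ 5 * (sC x * sC x) = uC x ^ 3 := by
    calc uC x ^ 5 * (sC x * sC x) = uC x ^ 3 * (sC x * uC x) * (sC x * uC x) := by ring
      _ = uC x ^ 3 := by rw [hsu]; ring
  have hSq : (∑ j, cdv j x * cdv j x) = sC x * sC x := (sC_sq x).symm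
  -- Dop i (uC f) in normal form, on U
  have hDi_uf : ∀ y ∈ Udom N, Dop μ i (fun z => uC z * f z) y
      = (fun z => uC z * Dop μ i f z) y + (fun z => (-1:ℂ) * (cdv i z * (uC z ^ 3 * f z))) y := by
    intro y hy
    rw [Dop_uCMul hN (hf.diffAt hy) hy]
    ring
  -- second Dunkl derivatives of uC f
  have hDDj : ∀ j : Fin N, Dop μ j (Dop μ i (fun y => uC y * f y)) x
      = -(cdv j x * uC x ^ 3) * Dop μ i f x + uC x * Dop μ j (Dop μ i f) x
        + (-1:ℂ) * ((if j = i then 1 else 0) * (uC x ^ 3 * f x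
            + 2 * (μ j:ℂ) * (uC x ^ 3 * Rop j f x)))
        + (-1:ℂ) * (cdv i x * (-3 * cdv j x * uC x ^ 5 * f x + uC x ^ 3 * Dop μ j f x)) := by
    intro j
    rw [Dop_congrU hDi_uf hx]
    have hd1 : DifferentiableAt ℝ (fun z => uC z * Dop μ i f z) x :=
      ((sm_uC hN).diffAt hx).mul ((hf.dop μ i).diffAt hx)
    have hd2 : DifferentiableAt ℝ (fun z => (-1:ℂ) * (cdv i z * (uC z ^ 3 * f z))) x :=
      ((diff_cdv i x).mul (smU3F.diffAt hx)).const_mul _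
    rw [Dop_add hd1 hd2, Dop_uCMul hN ((hf.dop μ i).diffAt hx) hx,
      Dop_const_mul ((diff_cdv i x).fun_mul (smU3F.diffAt hx)),
      Dop_cdMul (smU3F.diffAt hx) hx, Dop_uC3Mul hN (hf.diffAt hx) hx]
    rw [show uC (flipC j x) = uC x from uC_flip,
      show f (flipC j x) = Rop j f x from rfl]
    ring
  -- sum ∑ⱼ xⱼ·DⱼDᵢ(uf)
  have hTj : ∀ j : Fin N, cdv j x * Dop μ j (Dop μ i (fun y => uC y * f y)) x
      = (-(uC x ^ 3) * Dop μ i f x) * (cdv j x * cdv j x)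
        + uC x * (cdv j x * Dop μ j (Dop μ i f) x)
        + (if j = i then (1:ℂ) else 0) * (cdv j x * (-(uC x ^ 3 * f x)
            - 2 * (μ j:ℂ) * uC x ^ 3 * Rop j f x))
        + (3 * cdv i x * uC x ^ 5 * f x) * (cdv j x * cdv j x)
        + (-(cdv i x * uC x ^ 3)) * (cdv j x * Dop μ j f x) := by
    intro j
    rw [hDDj j]
    rcases eq_or_ne j i with rfl | hji
    · simp only [if_pos rfl]
      ring
    · simp only [if_neg hji]
      ring
  have hS1sum : ∑ j, cdv j x * Dop μ j (Dop μ i (fun y => uC y * f y)) x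
      = -(uC x) * Dop μ i f x + uC x * (∑ j, cdv j x * Dop μ j (Dop μ i f) x)
        + 2 * cdv i x * uC x ^ 3 * f x
        - 2 * (μ i:ℂ) * cdv i x * uC x ^ 3 * Rop i f x
        - cdv i x * uC x ^ 3 * (∑ j, cdv j x * Dop μ j f x) := by
    have hδsum : ∑ j, (if j = i then (1:ℂ) else 0) * (cdv j x * (-(uC x ^ 3 * f x)
          - 2 * (μ j:ℂ) * uC x ^ 3 * Rop j f x))
        = cdv i x * (-(uC x ^ 3 * f x) - 2 * (μ i:ℂ) * uC x ^ 3 * Rop i f x) := by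
      rw [Finset.sum_eq_single i (fun b _ hb' => by rw [if_neg hb', zero_mul])
        (fun hm => absurd (Finset.mem_univ i) hm), if_pos rfl, one_mul]
    rw [Finset.sum_congr rfl (fun j _ => hTj j)]
    simp only [Finset.sum_add_distrib, ← Finset.mul_sum, hSq]
    rw [hδsum]
    linear_combination (-(Dop μ i f x)) * hu3 + (3 * cdv i x * f x) * hu5
  -- reflections of Dᵢ(uf)
  have hRj : ∀ j : Fin N, (μ j:ℂ) * Rop j (Dop μ i (fun y => uC y * f y)) x
      = uC x * ((μ j:ℂ) * Rop j (Dop μ i f) x)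
        + (-(cdv i x * uC x ^ 3)) * ((μ j:ℂ) * Rop j f x)
        + (if j = i then (1:ℂ) else 0) * (2 * cdv i x * uC x ^ 3 * (μ j:ℂ) * Rop j f x) := by
    intro j
    have hxj : flipC j x ∈ Udom N := flipC_mem_Udom hx
    have h1 : Rop j (Dop μ i (fun y => uC y * f y)) x
        = Dop μ i (fun z => uC z * f z) (flipC j x) := rfl
    rw [h1, hDi_uf (flipC j x) hxj]
    simp only
    rw [show uC (flipC j x) = uC x from uC_flip,
      show Dop μ i f (flipC j x) = Rop j (Dop μ i f) x from rfl,
      show f (flipC j x) = Rop j f x from rfl,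
      cdv_flip (m := i) (j := j)]
    rcases eq_or_ne j i with rfl | hji
    · simp only [eq_self_iff_true, if_true]
      ring
    · simp only [if_neg hji, if_neg (fun h => hji h.symm : ¬ i = j)]
      ring
  have hS2sum : ∑ j, (μ j:ℂ) * Rop j (Dop μ i (fun y => uC y * f y)) x
      = uC x * (∑ j, (μ j:ℂ) * Rop j (Dop μ i f) x)
        - cdv i x * uC x ^ 3 * (∑ j, (μ j:ℂ) * Rop j f x)
        + 2 * cdv i x * uC x ^ 3 * (μ i:ℂ) * Rop i f x := by
    have hδsum2 : ∑ j, (if j = i then (1:ℂ) else 0)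
          * (2 * cdv i x * uC x ^ 3 * (μ j:ℂ) * Rop j f x)
        = 2 * cdv i x * uC x ^ 3 * (μ i:ℂ) * Rop i f x := by
      rw [Finset.sum_eq_single i (fun b _ hb' => by rw [if_neg hb', zero_mul])
        (fun hm => absurd (Finset.mem_univ i) hm), if_pos rfl, one_mul]
    rw [Finset.sum_congr rfl (fun j _ => hRj j)]
    simp only [Finset.sum_add_distrib, ← Finset.mul_sum]
    rw [hδsum2]
    ring
  -- assemble
  have hlapUF : lapD μ (fun y => uC y * f y) x = uC x * lapD μ f x
      - 2 * uC x ^ 3 * ∑ j, cdv j x * Dop μ j f x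
      + (3 - (N : ℂ)) * uC x ^ 3 * f x
      - 2 * uC x ^ 3 * ∑ j, (μ j : ℂ) * Rop j f x := lap_uCMul hN hf hx
  have hDiUF : Dop μ i (fun y => uC y * f y) x
      = -(cdv i x * uC x ^ 3) * f x + uC x * Dop μ i f x := Dop_uCMul hN (hf.diffAt hx) hx
  have hLHS1 : lapD μ (fun y => cdv i y * (uC y * f y)) x
      = cdv i x * lapD μ (fun y => uC y * f y) x
        + 2 * Dop μ i (fun y => uC y * f y) x := lap_cdMul smUF hx
  rw [hLHS1, hlapUF, hDiUF, Gop, Gop, hS1sum, hS2sum, hlapUF, hDiUF]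
  ring

end S3

section Final

open ContDiff

variable {μ : Fin N → ℝ} {hb k : ℝ} {f g h : (Fin N → ℝ) → ℂ} {x : Fin N → ℝ} {i j m : Fin N}

/-- Normal form of the Hamiltonian. -/
lemma Hkc_eq (hg : Sm g) (hx : x ∈ Udom N) :
    Hkc μ hb k g x = (-(hb:ℂ)^2/2) * lapD μ g x + (-(k:ℂ)) * (uC x * g x) := by
  set c : ℂ := -(Complex.I * (hb:ℂ)) with hc
  have hterm : ∀ j : Fin N, Pop μ hb j (Pop μ hb j g) x = c^2 * Dop μ j (Dop μ j g) x := by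
    intro j
    rw [Pop_eq, show Pop μ hb j g = fun y => c * Dop μ j g y from rfl,
      Dop_const_mul ((hg.dop μ j).diffAt hx)]
    ring
  have hc2 : c^2 = -(hb:ℂ)^2 := by
    rw [hc, show (-(Complex.I * (hb:ℂ)))^2 = Complex.I^2 * (hb:ℂ)^2 from by ring,
      Complex.I_sq]
    ring
  show (1/2 : ℂ) * ∑ j, Pop μ hb j (Pop μ hb j g) x - (k:ℂ) * g x / ((nrm x : ℝ) : ℂ) = _
  rw [Finset.sum_congr rfl (fun j _ => hterm j), ← Finset.mul_sum,
    show (∑ j, Dop μ j (Dop μ j g) x) = lapD μ g x from rfl, hc2,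
    show (k:ℂ) * g x / ((nrm x : ℝ) : ℂ) = (k:ℂ) * (uC x * g x) from by
      rw [div_eq_mul_inv, show (((nrm x : ℝ) : ℂ))⁻¹ = uC x from rfl]; ring]
  ring

lemma Sm.hkc (hN : 0 < N) (hg : Sm g) (μ : Fin N → ℝ) (hb k : ℝ) : Sm (Hkc μ hb k g) := by
  have h1 : Sm (fun y => (-(hb:ℂ)^2/2) * lapD μ g y + (-(k:ℂ)) * (uC y * g y)) :=
    ((hg.lap μ).constMul _).add (((sm_uC hN).mul hg).constMul _)
  exact h1.congrU (fun y hy => Hkc_eq hg hy)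

lemma Sm.alrl (hN : 0 < N) (hg : Sm g) (μ : Fin N → ℝ) (hb k : ℝ) (i : Fin N) :
    Sm (Alrl μ hb k i g) := by
  have h1 : Sm (fun y => -(hb:ℂ)^2 * Gop μ i g y - (k:ℂ) * (cdv i y * (uC y * g y))) :=
    ((hg.gop μ i).constMul _).sub (((Sm.cd i).mul ((sm_uC hN).mul hg)).constMul _)
  exact h1.congrU (fun y hy => Alrl_eq hg hy)

lemma Gop_congrU (h' : ∀ y ∈ Udom N, g y = h y) (hx : x ∈ Udom N) :
    Gop μ i g x = Gop μ i h x := by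
  have hD : ∀ y ∈ Udom N, Dop μ i g y = Dop μ i h y := fun y hy => Dop_congrU h' hy
  have e1 : lapD μ g x = lapD μ h x := lap_congrU h' hx
  have e2 : ∑ j, cdv j x * Dop μ j (Dop μ i g) x = ∑ j, cdv j x * Dop μ j (Dop μ i h) x :=
    Finset.sum_congr rfl (fun j _ => by rw [Dop_congrU hD hx])
  have e3 : ∑ j, (μ j:ℂ) * Rop j (Dop μ i g) x = ∑ j, (μ j:ℂ) * Rop j (Dop μ i h) x :=
    Finset.sum_congr rfl (fun j _ => by
      rw [show Rop j (Dop μ i g) x = Dop μ i g (flipC j x) from rfl,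
        show Rop j (Dop μ i h) x = Dop μ i h (flipC j x) from rfl, hD _ (flipC_mem_Udom hx)])
  simp only [Gop]
  rw [e1, e2, e3, hD x hx]

lemma Gop_add (hg : Sm g) (hh : Sm h) (hx : x ∈ Udom N) :
    Gop μ i (fun y => g y + h y) x = Gop μ i g x + Gop μ i h x := by
  have hD : ∀ y ∈ Udom N, Dop μ i (fun z => g z + h z) y = Dop μ i g y + Dop μ i h y :=
    fun y hy => Dop_add (hg.diffAt hy) (hh.diffAt hy)
  have hDD : ∀ j : Fin N, Dop μ j (Dop μ i fun z => g z + h z) x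
      = Dop μ j (Dop μ i g) x + Dop μ j (Dop μ i h) x := by
    intro j
    rw [Dop_congrU hD hx]
    exact Dop_add ((hg.dop μ i).diffAt hx) ((hh.dop μ i).diffAt hx)
  have e2 : ∑ j, cdv j x * Dop μ j (Dop μ i fun z => g z + h z) x
      = (∑ j, cdv j x * Dop μ j (Dop μ i g) x) + ∑ j, cdv j x * Dop μ j (Dop μ i h) x := by
    rw [← Finset.sum_add_distrib]
    exact Finset.sum_congr rfl (fun j _ => by rw [hDD j]; ring)
  have e3 : ∑ j, (μ j:ℂ) * Rop j (Dop μ i fun z => g z + h z) x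
      = (∑ j, (μ j:ℂ) * Rop j (Dop μ i g) x) + ∑ j, (μ j:ℂ) * Rop j (Dop μ i h) x := by
    rw [← Finset.sum_add_distrib]
    refine Finset.sum_congr rfl (fun j _ => ?_)
    rw [show Rop j (Dop μ i fun z => g z + h z) x
        = Dop μ i (fun z => g z + h z) (flipC j x) from rfl,
      hD _ (flipC_mem_Udom hx),
      show Rop j (Dop μ i g) x = Dop μ i g (flipC j x) from rfl,
      show Rop j (Dop μ i h) x = Dop μ i h (flipC j x) from rfl]
    ring
  simp only [Gop]
  rw [lap_add hg hh hx, hD x hx, e2, e3]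
  ring

lemma Gop_const_mul {c : ℂ} (hg : Sm g) (hx : x ∈ Udom N) :
    Gop μ i (fun y => c * g y) x = c * Gop μ i g x := by
  have hD : ∀ y ∈ Udom N, Dop μ i (fun z => c * g z) y = c * Dop μ i g y :=
    fun y hy => Dop_const_mul (hg.diffAt hy)
  have hDD : ∀ j : Fin N, Dop μ j (Dop μ i fun z => c * g z) x
      = c * Dop μ j (Dop μ i g) x := by
    intro j
    rw [Dop_congrU hD hx]
    exact Dop_const_mul ((hg.dop μ i).diffAt hx)
  have e2 : ∑ j, cdv j x * Dop μ j (Dop μ i fun z => c * g z) x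
      = c * ∑ j, cdv j x * Dop μ j (Dop μ i g) x := by
    rw [Finset.mul_sum]
    exact Finset.sum_congr rfl (fun j _ => by rw [hDD j]; ring)
  have e3 : ∑ j, (μ j:ℂ) * Rop j (Dop μ i fun z => c * g z) x
      = c * ∑ j, (μ j:ℂ) * Rop j (Dop μ i g) x := by
    rw [Finset.mul_sum]
    refine Finset.sum_congr rfl (fun j _ => ?_)
    rw [show Rop j (Dop μ i fun z => c * g z) x
        = Dop μ i (fun z => c * g z) (flipC j x) from rfl,
      hD _ (flipC_mem_Udom hx),
      show Rop j (Dop μ i g) x = Dop μ i g (flipC j x) from rfl]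
    ring
  simp only [Gop]
  rw [lap_const_mul hg hx, hD x hx, e2, e3]
  ring

end Final

/-- Each component of the Dunkl Laplace–Runge–Lenz vector commutes with the
Dunkl–Kepler–Coulomb Hamiltonian. -/
theorem dunkl_lrl_conserved (N : ℕ) (hN : 2 ≤ N) (μ : Fin N → ℝ)
    (hb k : ℝ) (hbpos : hb > 0)
    (f : (Fin N → ℝ) → ℂ) (hf : ContDiffOn ℝ (⊤ : ℕ∞) f (Udom N)) :
    ∀ i : Fin N, ∀ x ∈ Udom N,
      Hkc μ hb k (Alrl μ hb k i f) x = Alrl μ hb k i (Hkc μ hb k f) x := by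
  intro i x hx
  have hN0 : 0 < N := lt_of_lt_of_le (by norm_num) hN
  have hfS : Sm f := hf.of_le (by simp)
  have smUF : Sm (fun y => uC y * f y) := (sm_uC hN0).mul hfS
  have smXUF : Sm (fun y => cdv i y * (uC y * f y)) := (Sm.cd i).mul smUF
  have smA : Sm (Alrl μ hb k i f) := hfS.alrl hN0 μ hb k i
  have smH : Sm (Hkc μ hb k f) := hfS.hkc hN0 μ hb k
  -- LHS
  have hL1 : Hkc μ hb k (Alrl μ hb k i f) x
      = (-(hb:ℂ)^2/2) * lapD μ (Alrl μ hb k i f) x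
        + (-(k:ℂ)) * (uC x * Alrl μ hb k i f x) := Hkc_eq smA hx
  have hL2 : lapD μ (Alrl μ hb k i f) x
      = -(hb:ℂ)^2 * lapD μ (Gop μ i f) x
        + (-(k:ℂ)) * lapD μ (fun y => cdv i y * (uC y * f y)) x := by
    rw [lap_congrU (h := fun y => (-(hb:ℂ)^2) * Gop μ i f y
        + (-(k:ℂ)) * (cdv i y * (uC y * f y)))
      (fun y hy => by rw [Alrl_eq hfS hy]; ring) hx]
    rw [lap_add ((hfS.gop μ i).constMul _) (smXUF.constMul _) hx,
      lap_const_mul (hfS.gop μ i) hx, lap_const_mul smXUF hx]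
  -- RHS
  have hR1 : Alrl μ hb k i (Hkc μ hb k f) x
      = -(hb:ℂ)^2 * Gop μ i (Hkc μ hb k f) x
        - (k:ℂ) * (cdv i x * (uC x * Hkc μ hb k f x)) := Alrl_eq smH hx
  have hR2 : Gop μ i (Hkc μ hb k f) x
      = (-(hb:ℂ)^2/2) * Gop μ i (lapD μ f) x
        + (-(k:ℂ)) * Gop μ i (fun y => uC y * f y) x := by
    rw [Gop_congrU (h := fun y => (-(hb:ℂ)^2/2) * lapD μ f y + (-(k:ℂ)) * (uC y * f y))
      (fun y hy => Hkc_eq hfS hy) hx]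
    rw [Gop_add ((hfS.lap μ).constMul _) (smUF.constMul _) hx,
      Gop_const_mul (hfS.lap μ) hx, Gop_const_mul smUF hx]
  rw [hL1, hL2, hR1, hR2, Hkc_eq hfS hx, Alrl_eq hfS hx,
    lap_gop hfS hx]
  linear_combination ((k:ℂ) * (hb:ℂ)^2) * pot_comm hN0 hfS hx

end
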